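/- Assume e = 2. For any 2-restricted partition λ in B(Λ_m), the ceiling of λ (the first direction partition in its Lakshmibai–Seshadri path / the roof e-core) is the staircase (ℓ, ℓ-1, ..., 1) where ℓ = ℓ(λ) is the number of nonzero parts of λ, and the floor of λ (the final direction / base e-core) is the staircase (a, a-1, ..., 1) where a = λ_0 is the largest part. -/

import Mathlib

/-- A partition: a weakly decreasing, eventually zero sequence of naturals. -/
structure PartitionSeq where
  parts : ℕ → ℕ
  antitone : ∀ k, parts (k + 1) ≤ parts k
  eventually_zero : ∃ N, ∀ k, N ≤ k → parts k = 0

/-- A partition is `e`-restricted if consecutive parts differ by less than `e`. -/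
def eRestricted (e : ℕ) (l : PartitionSeq) : Prop :=
  ∀ k, l.parts k < l.parts (k + 1) + e

/-- The set of beta numbers of charge `m` of a partition. -/
def betaSet (l : PartitionSeq) (m : ℤ) : Set ℤ :=
  {x | ∃ k : ℕ, x = (l.parts k : ℤ) + m - k}

/-- `U(J)`: the beads that can be slid up by one on their runner. -/
def USet (e : ℕ) (J : Set ℤ) : Set ℤ :=
  {x | x ∈ J ∧ x - (e : ℤ) ∉ J}

/-- One application of the up operation, as a relation on partitions. -/
def UpStep (e : ℕ) (m : ℤ) (l l' : PartitionSeq) : Prop :=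
  ∃ p q : ℤ,
    IsGreatest (USet e (betaSet l m)) p ∧
    IsLeast {x : ℤ | p < x ∧ ¬ ((e : ℤ) ∣ (x - p)) ∧
      x - (e : ℤ) ∈ betaSet l m ∧ x ∉ betaSet l m} q ∧
    betaSet l' m = (betaSet l m \ {p}) ∪ {q}

/-- One application of the down operation, as a relation on partitions. -/
def DownStep (e : ℕ) (m : ℤ) (l l' : PartitionSeq) : Prop :=
  ∃ p' q' : ℤ,
    IsLeast (USet e (betaSet l m)) p' ∧
    IsLeast ({x : ℤ | p' - (e : ℤ) < x ∧ x ∈ betaSet l m ∧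
      x + (e : ℤ) ∉ betaSet l m} ∪ {p'}) q' ∧
    betaSet l' m = (betaSet l m \ {q'}) ∪ {p' - (e : ℤ)}

/-- `r` is the e-core `roof(l)`, obtained by iterating the up operation
until no bead can be slid up. -/
def RoofOf (e : ℕ) (m : ℤ) (l r : PartitionSeq) : Prop :=
  ∃ (N : ℕ) (f : ℕ → PartitionSeq), f 0 = l ∧ f N = r ∧
    (∀ k < N, UpStep e m (f k) (f (k + 1))) ∧
    USet e (betaSet r m) = ∅

/-- `b` is the e-core `base(l)`, obtained by iterating the down operation
until no bead can be slid up. -/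
def BaseOf (e : ℕ) (m : ℤ) (l b : PartitionSeq) : Prop :=
  ∃ (N : ℕ) (f : ℕ → PartitionSeq), f 0 = l ∧ f N = b ∧
    (∀ k < N, DownStep e m (f k) (f (k + 1))) ∧
    USet e (betaSet b m) = ∅

namespace CF

/-- The k-th beta number. -/
def bk (l : PartitionSeq) (m : ℤ) (k : ℕ) : ℤ := (l.parts k : ℤ) + m - k

lemma mem_betaSet {l : PartitionSeq} {m : ℤ} {x : ℤ} :
    x ∈ betaSet l m ↔ ∃ k, x = bk l m k := Iff.rfl

lemma bk_mem (l : PartitionSeq) (m : ℤ) (k : ℕ) : bk l m k ∈ betaSet l m := ⟨k, rfl⟩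

lemma parts_antitone (l : PartitionSeq) : Antitone l.parts :=
  antitone_nat_of_succ_le l.antitone

lemma bk_strictAnti (l : PartitionSeq) (m : ℤ) : StrictAnti (bk l m) := by
  apply strictAnti_nat_of_succ_lt
  intro k
  have := l.antitone k
  unfold bk
  push_cast
  omega

lemma bk_le_bk0 (l : PartitionSeq) (m : ℤ) (k : ℕ) : bk l m k ≤ bk l m 0 :=
  (bk_strictAnti l m).antitone (Nat.zero_le k)

lemma exists_zero (l : PartitionSeq) : ∃ i, l.parts i = 0 := by
  obtain ⟨N, hN⟩ := l.eventually_zero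
  exact ⟨N, hN N le_rfl⟩

/-- The number of nonzero parts. -/
noncomputable def Lnum (l : PartitionSeq) : ℕ := Nat.find (exists_zero l)

lemma parts_eq_zero_iff (l : PartitionSeq) (k : ℕ) : l.parts k = 0 ↔ Lnum l ≤ k := by
  constructor
  · intro h; exact Nat.find_min' (exists_zero l) h
  · intro h
    have h1 : l.parts (Lnum l) = 0 := Nat.find_spec (exists_zero l)
    have := parts_antitone l h
    omega

lemma Lset_eq (l : PartitionSeq) : {j : ℕ | l.parts j ≠ 0} = Set.Iio (Lnum l) := by
  ext j
  simp only [Set.mem_setOf_eq, Set.mem_Iio, ne_eq]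
  rw [parts_eq_zero_iff]
  omega

lemma ncard_Lset (l : PartitionSeq) : ({j : ℕ | l.parts j ≠ 0}).ncard = Lnum l := by
  rw [Lset_eq, ← Finset.coe_Iio, Set.ncard_coe_finset, Nat.card_Iio]

/-- Beads having a gap somewhere below them. -/
def HB (J : Set ℤ) : Set ℤ := {x | x ∈ J ∧ ∃ y, y < x ∧ y ∉ J}

/-- Gaps having a bead somewhere above them. -/
def GB (J : Set ℤ) : Set ℤ := {y | y ∉ J ∧ ∃ x, y < x ∧ x ∈ J}

lemma mem_of_le (l : PartitionSeq) (m : ℤ) {y : ℤ} (hy : y ≤ m - Lnum l) :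
    y ∈ betaSet l m := by
  refine ⟨(m - y).toNat, ?_⟩
  have h0 : (0 : ℤ) ≤ Lnum l := Int.natCast_nonneg _
  have h1 : ((m - y).toNat : ℤ) = m - y := Int.toNat_of_nonneg (by omega)
  have h2 : l.parts (m - y).toNat = 0 := by
    rw [parts_eq_zero_iff]
    omega
  rw [h2]
  push_cast
  omega

lemma gap_not_mem (l : PartitionSeq) (m : ℤ) : (m - Lnum l + 1) ∉ betaSet l m := by
  rintro ⟨k, hk⟩
  by_cases h : Lnum l ≤ k
  · have : l.parts k = 0 := (parts_eq_zero_iff l k).2 h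
    rw [this] at hk
    push_cast at hk
    omega
  · have h2 : l.parts k ≠ 0 := by rw [Ne, parts_eq_zero_iff]; omega
    have h3 : (1:ℤ) ≤ l.parts k := by exact_mod_cast Nat.one_le_iff_ne_zero.2 h2
    have h4 : (k:ℤ) < Lnum l := by exact_mod_cast Nat.lt_of_not_le h
    omega

lemma HB_eq (l : PartitionSeq) (m : ℤ) :
    HB (betaSet l m) = bk l m '' {j : ℕ | l.parts j ≠ 0} := by
  ext x
  constructor
  · rintro ⟨⟨k, rfl⟩, y, hyx, hyJ⟩
    refine ⟨k, ?_, rfl⟩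
    simp only [Set.mem_setOf_eq]
    intro hk0
    have hLk : Lnum l ≤ k := (parts_eq_zero_iff l k).1 hk0
    apply hyJ
    apply mem_of_le
    rw [hk0] at hyx
    have h4 : (Lnum l : ℤ) ≤ k := by exact_mod_cast hLk
    push_cast at hyx
    omega
  · rintro ⟨j, hj, rfl⟩
    simp only [Set.mem_setOf_eq] at hj
    have hjL : j < Lnum l := by rw [← not_le, ← parts_eq_zero_iff]; exact hj
    refine ⟨bk_mem l m j, m - Lnum l + 1, ?_, gap_not_mem l m⟩
    have hL1 : j ≤ Lnum l - 1 := by omega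
    have h1 : bk l m (Lnum l - 1) ≤ bk l m j := (bk_strictAnti l m).antitone hL1
    have h2 : l.parts (Lnum l - 1) ≠ 0 := by rw [Ne, parts_eq_zero_iff]; omega
    unfold bk at h1 ⊢
    have : (1:ℤ) ≤ l.parts (Lnum l - 1) := by exact_mod_cast Nat.one_le_iff_ne_zero.2 h2
    have hc : ((Lnum l - 1 : ℕ) : ℤ) = (Lnum l : ℤ) - 1 := by
      have : 1 ≤ Lnum l := by omega
      push_cast [this]
      ring
    omega

lemma ncard_HB (l : PartitionSeq) (m : ℤ) :
    (HB (betaSet l m)).ncard = Lnum l := by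
  rw [HB_eq, Set.ncard_image_of_injective _ (bk_strictAnti l m).injective, ncard_Lset]

lemma HB_mem_iff : True := trivial

end CF

namespace CF

lemma bk_def (l : PartitionSeq) (m : ℤ) (k : ℕ) : bk l m k = (l.parts k : ℤ) + m - k := rfl

lemma GB_eq (l : PartitionSeq) (m : ℤ) :
    GB (betaSet l m) = Set.Ioo (m - Lnum l) (bk l m 0) \ betaSet l m := by
  ext y
  constructor
  · rintro ⟨hyJ, x, hyx, k, rfl⟩
    have e1 : (l.parts k : ℤ) + m - k = bk l m k := rfl
    have e2 := bk_le_bk0 l m k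
    refine ⟨⟨?_, by omega⟩, hyJ⟩
    by_contra h
    exact hyJ (mem_of_le l m (by omega))
  · rintro ⟨⟨h1, h2⟩, hyJ⟩
    exact ⟨hyJ, bk l m 0, h2, bk_mem l m 0⟩

lemma Ioo_inter_eq (l : PartitionSeq) (m : ℤ) :
    Set.Ioo (m - Lnum l) (bk l m 0) ∩ betaSet l m = bk l m '' Set.Ico 1 (Lnum l) := by
  ext x
  constructor
  · rintro ⟨⟨h1, h2⟩, k, rfl⟩
    have e1 : (l.parts k : ℤ) + m - k = bk l m k := rfl
    refine ⟨k, ⟨?_, ?_⟩, rfl⟩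
    · rcases Nat.eq_zero_or_pos k with rfl | hk
      · rw [bk_def] at h2; push_cast at h2; omega
      · omega
    · by_contra h
      have hk0 : l.parts k = 0 := (parts_eq_zero_iff l k).2 (by omega)
      have h4 : (Lnum l : ℤ) ≤ k := by exact_mod_cast (not_lt.1 h)
      rw [hk0] at h1
      push_cast at h1
      omega
  · rintro ⟨k, ⟨hk1, hk2⟩, rfl⟩
    refine ⟨⟨?_, ?_⟩, bk_mem l m k⟩
    · have hk0 : l.parts k ≠ 0 := by rw [Ne, parts_eq_zero_iff]; omega
      have h3 : (1:ℤ) ≤ l.parts k := by exact_mod_cast Nat.one_le_iff_ne_zero.2 hk0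
      have h4 : (k:ℤ) < Lnum l := by exact_mod_cast hk2
      rw [bk_def]
      omega
    · exact bk_strictAnti l m (by omega)

lemma ncard_GB (l : PartitionSeq) (m : ℤ) :
    (GB (betaSet l m)).ncard = l.parts 0 := by
  have hdiff : Set.Ioo (m - Lnum l) (bk l m 0) \ betaSet l m
      = Set.Ioo (m - Lnum l) (bk l m 0) \ (Set.Ioo (m - Lnum l) (bk l m 0) ∩ betaSet l m) := by
    ext y; constructor
    · rintro ⟨h1, h2⟩; exact ⟨h1, fun h => h2 h.2⟩
    · rintro ⟨h1, h2⟩; exact ⟨h1, fun h => h2 ⟨h1, h⟩⟩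
  have hsub : Set.Ioo (m - Lnum l) (bk l m 0) ∩ betaSet l m ⊆ Set.Ioo (m - Lnum l) (bk l m 0) :=
    Set.inter_subset_left
  have hfin : (Set.Ioo (m - Lnum l) (bk l m 0) ∩ betaSet l m).Finite :=
    (Set.finite_Ioo _ _).subset hsub
  rw [GB_eq, hdiff, Set.ncard_diff hsub hfin]
  have h1 : (Set.Ioo (m - (Lnum l:ℤ)) (bk l m 0)).ncard = (bk l m 0 - (m - Lnum l) - 1).toNat := by
    rw [← Finset.coe_Ioo, Set.ncard_coe_finset, Int.card_Ioo]
  have h2 : (Set.Ioo (m - (Lnum l:ℤ)) (bk l m 0) ∩ betaSet l m).ncard = Lnum l - 1 := by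
    rw [Ioo_inter_eq, Set.ncard_image_of_injective _ (bk_strictAnti l m).injective,
      ← Finset.coe_Ico, Set.ncard_coe_finset, Nat.card_Ico]
  rw [h1, h2]
  have hb0 : bk l m 0 = (l.parts 0 : ℤ) + m := by rw [bk_def]; push_cast; ring
  rw [hb0]
  have hL0 : Lnum l = 0 → l.parts 0 = 0 := fun h => (parts_eq_zero_iff l 0).2 (by omega)
  omega

/-- the `J`-level version of 2-restrictedness. -/
def Rstr (J : Set ℤ) : Prop := ∀ x ∈ J, x - 1 ∈ J ∨ x - 2 ∈ J

lemma rstr_of_eRestricted {l : PartitionSeq} {m : ℤ} (h : eRestricted 2 l) :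
    Rstr (betaSet l m) := by
  rintro x ⟨k, rfl⟩
  have h1 := h k
  have h2 := l.antitone k
  have h3 : bk l m (k+1) ∈ betaSet l m := bk_mem l m (k+1)
  have h4 : bk l m (k+1) = (l.parts (k+1) : ℤ) + m - (k+1) := rfl
  by_cases hc : l.parts (k+1) = l.parts k
  · left
    have he : ((l.parts k : ℤ) + m - k) - 1 = bk l m (k+1) := by rw [h4]; push_cast; omega
    rw [he]; exact h3
  · right
    have he : ((l.parts k : ℤ) + m - k) - 2 = bk l m (k+1) := by rw [h4]; push_cast; omega
    rw [he]; exact h3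

lemma HB_swap (J : Set ℤ) (p q y0 : ℤ) (hp : p ∈ J) (hq : q ∉ J) (hpq : p < q)
    (hy0 : y0 < p) (hy0J : y0 ∉ J) :
    HB ((J \ {p}) ∪ {q}) = insert q (HB J \ {p}) := by
  ext x
  simp only [HB, Set.mem_setOf_eq, Set.mem_union, Set.mem_diff, Set.mem_singleton_iff,
    Set.mem_insert_iff]
  constructor
  · rintro ⟨hx, y, hyx, hyJ'⟩
    by_cases hxq : x = q
    · left; exact hxq
    · right
      rcases hx with ⟨hxJ, hxp⟩ | hxq'
      · refine ⟨⟨hxJ, ?_⟩, hxp⟩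
        by_cases hyp : y = p
        · exact ⟨y0, by omega, hy0J⟩
        · exact ⟨y, hyx, fun hyJ => hyJ' (Or.inl ⟨hyJ, hyp⟩)⟩
      · exact absurd hxq' hxq
  · rintro (rfl | ⟨⟨hxJ, y, hyx, hyJ⟩, hxp⟩)
    · refine ⟨Or.inr rfl, p, hpq, ?_⟩
      rintro (⟨_, hne⟩ | hpq')
      · exact hne rfl
      · omega
    · refine ⟨Or.inl ⟨hxJ, hxp⟩, ?_⟩
      by_cases hyq : y = q
      · refine ⟨p, by omega, ?_⟩
        rintro (⟨_, hne⟩ | hpe)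
        · exact hne rfl
        · omega
      · refine ⟨y, hyx, ?_⟩
        rintro (⟨hyJ2, _⟩ | hye)
        · exact hyJ hyJ2
        · exact hyq hye

lemma GB_swap (J : Set ℤ) (q h w : ℤ) (hqJ : q ∈ J) (hhJ : h ∉ J) (hhq : h < q)
    (hwJ : w ∈ J) (hwq : q < w) :
    GB ((J \ {q}) ∪ {h}) = insert q (GB J \ {h}) := by
  ext y
  simp only [GB, Set.mem_setOf_eq, Set.mem_union, Set.mem_diff, Set.mem_singleton_iff,
    Set.mem_insert_iff]
  constructor
  · rintro ⟨hyJ', x, hyx, hxJ'⟩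
    by_cases hyq : y = q
    · left; exact hyq
    · right
      have hyh : y ≠ h := fun he => hyJ' (Or.inr he)
      have hyJ : y ∉ J := fun hyJ => hyJ' (Or.inl ⟨hyJ, hyq⟩)
      refine ⟨⟨hyJ, ?_⟩, hyh⟩
      rcases hxJ' with ⟨hxJ, _⟩ | hxh
      · exact ⟨x, hyx, hxJ⟩
      · exact ⟨q, by omega, hqJ⟩
  · rintro (rfl | ⟨⟨hyJ, x, hyx, hxJ⟩, hyh⟩)
    · refine ⟨?_, w, hwq, Or.inl ⟨hwJ, by omega⟩⟩
      rintro (⟨_, hne⟩ | he)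
      · exact hne rfl
      · omega
    · refine ⟨?_, ?_⟩
      · rintro (⟨hyJ2, _⟩ | he)
        · exact hyJ hyJ2
        · exact hyh he
      · by_cases hxq : x = q
        · exact ⟨w, by omega, Or.inl ⟨hwJ, by omega⟩⟩
        · exact ⟨x, hyx, Or.inl ⟨hxJ, hxq⟩⟩

end CF

namespace CF

/-- If every bead can slide down by 2 (i.e. `USet 2 J = ∅`), the partition is a staircase. -/
lemma core_shape {r : PartitionSeq} {m : ℤ} (h2 : ∀ x ∈ betaSet r m, x - 2 ∈ betaSet r m) :
    ∀ k, r.parts k = r.parts 0 - k := by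
  have step : ∀ k, r.parts (k+1) + 1 = r.parts k ∨ r.parts (k+2) = r.parts k := by
    intro k
    obtain ⟨j, hj⟩ := h2 (bk r m k) (bk_mem r m k)
    have hj' : bk r m j = bk r m k - 2 := hj.symm
    have hlt : bk r m j < bk r m k := by omega
    have hkj : k < j := by
      by_contra hle
      have := (bk_strictAnti r m).antitone (not_lt.1 hle)
      omega
    have hstep1 : bk r m (k+1) ≤ bk r m k - 1 := by
      have := bk_strictAnti r m (by omega : k < k + 1)
      omega
    rcases Nat.lt_or_ge j (k+2) with hj2 | hj2
    · have hjk : j = k + 1 := by omega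
      subst hjk
      left
      have e1 : bk r m (k+1) = (r.parts (k+1) : ℤ) + m - (k+1) := rfl
      have e2 : bk r m k = (r.parts k : ℤ) + m - k := rfl
      rw [e1, e2] at hj'
      push_cast at hj'
      omega
    · have hmono : bk r m j ≤ bk r m (k+2) := (bk_strictAnti r m).antitone hj2
      have hstep2 : bk r m (k+2) ≤ bk r m (k+1) - 1 := by
        have := bk_strictAnti r m (by omega : k + 1 < k + 2)
        omega
      have heq : bk r m (k+2) = bk r m k - 2 := by omega
      right
      have e1 : bk r m (k+2) = (r.parts (k+2) : ℤ) + m - (k+2) := rfl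
      have e2 : bk r m k = (r.parts k : ℤ) + m - k := rfl
      rw [e1, e2] at heq
      push_cast at heq
      omega
  have key : ∀ k, r.parts k ≠ 0 → r.parts (k+1) + 1 = r.parts k := by
    intro k hk0
    by_contra hne
    have h22 : r.parts (k+2) = r.parts k := (step k).resolve_left hne
    have h21 : r.parts (k+1) = r.parts k := by
      have h1 := r.antitone k
      have h2 := r.antitone (k+1)
      rw [show k+1+1 = k+2 by omega] at h2
      omega
    have const : ∀ n, r.parts (k+n) = r.parts k ∧ r.parts (k+n+1) = r.parts k := by
      intro n
      induction n with
      | zero => exact ⟨rfl, h21⟩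
      | succ i ih =>
        obtain ⟨ha, hb⟩ := ih
        have hstep := step (k+i)
        have hi2 : r.parts (k+i+2) = r.parts k := by omega
        constructor
        · have he : k + (i+1) = k + i + 1 := by omega
          rw [he]; exact hb
        · have he : k + (i+1) + 1 = k + i + 2 := by omega
          rw [he]; omega
    obtain ⟨N, hN⟩ := r.eventually_zero
    have h1 := (const N).1
    have h2 := hN (k+N) (by omega)
    omega
  intro k
  induction k with
  | zero => simp
  | succ i ih =>
    by_cases hi : r.parts i = 0
    · have := r.antitone i
      omega
    · have := key i hi
      omega

/-- `UpStep` at `e = 2` preserves the number of beads-above-a-hole. -/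
lemma upStep_ncard {l l' : PartitionSeq} {m : ℤ} (h : UpStep 2 m l l') :
    (HB (betaSet l' m)).ncard = (HB (betaSet l m)).ncard := by
  obtain ⟨p, q, hp, hq, hJ'⟩ := h
  obtain ⟨⟨hpJ, hp2⟩, -⟩ := hp
  obtain ⟨⟨hpq, -, -, hqJ⟩, -⟩ := hq
  have hc2 : ((2:ℕ):ℤ) = 2 := by norm_num
  rw [hc2] at hp2
  rw [hJ', HB_swap (betaSet l m) p q (p-2) hpJ hqJ hpq (by omega) hp2]
  apply Set.ncard_exchange
  · intro hmem
    exact hqJ hmem.1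
  · exact ⟨hpJ, p - 2, by omega, hp2⟩

/-- `DownStep` at `e = 2` on a 2-restricted bead configuration preserves the number
of gaps-below-a-bead, and preserves 2-restrictedness. -/
lemma downStep_step {l l' : PartitionSeq} {m : ℤ} (hR : Rstr (betaSet l m))
    (h : DownStep 2 m l l') :
    (GB (betaSet l' m)).ncard = (GB (betaSet l m)).ncard ∧ Rstr (betaSet l' m) := by
  obtain ⟨p, q, hp, hq, hJ'⟩ := h
  obtain ⟨⟨hpJ, hp2⟩, hplb⟩ := hp
  have hc2 : ((2:ℕ):ℤ) = 2 := by norm_num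
  rw [hc2] at hp2 hq hJ'
  set J := betaSet l m with hJdef
  -- p - 1 ∈ J by 2-restrictedness
  have hp1 : p - 1 ∈ J := by
    rcases hR p hpJ with h1 | h1
    · exact h1
    · exact absurd h1 hp2
  have hp3 : p - 3 ∈ J := by
    rcases hR (p-1) hp1 with h1 | h1
    · exact absurd (by rw [show p - 2 = p - 1 - 1 by ring]; exact h1) hp2
    · rw [show p - 3 = p - 1 - 2 by ring]; exact h1
  have hqle : q ≤ p := hq.2 (Or.inr rfl)
  -- determine q
  have hcase : (q = p ∧ p + 1 ∈ J) ∨ (q = p - 1 ∧ p + 1 ∉ J) := by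
    by_cases hpp1 : p + 1 ∈ J
    · left
      refine ⟨?_, hpp1⟩
      rcases hq.1 with ⟨h1, h2, h3⟩ | h4
      · have hq2 : q = p - 1 ∨ q = p := by omega
        rcases hq2 with he | he
        · exact absurd (by rw [he, show p - 1 + 2 = p + 1 by ring]; exact hpp1) h3
        · exact he
      · exact h4
    · right
      refine ⟨?_, hpp1⟩
      have h1 : q ≤ p - 1 := hq.2 (Or.inl ⟨by omega, hp1,
        by rw [show p - 1 + 2 = p + 1 by ring]; exact hpp1⟩)
      have h2 : p - 2 < q := by
        rcases hq.1 with ⟨h1', -, -⟩ | h4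
        · exact h1'
        · simp only [Set.mem_singleton_iff] at h4; omega
      omega
  have hqJ : q ∈ J := by
    rcases hcase with ⟨he, -⟩ | ⟨he, -⟩
    · rw [he]; exact hpJ
    · rw [he]; exact hp1
  obtain ⟨w, hwJ, hwq, hwp⟩ : ∃ w, w ∈ J ∧ q < w ∧ w ≠ q := by
    rcases hcase with ⟨he, hw⟩ | ⟨he, -⟩
    · exact ⟨p + 1, hw, by omega, by omega⟩
    · exact ⟨p, hpJ, by omega, by omega⟩
  constructor
  · rw [hJ', GB_swap J q (p - 2) w hqJ hp2 (by omega) hwJ (by omega)]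
    apply Set.ncard_exchange
    · intro hmem
      exact hmem.1 hqJ
    · exact ⟨hp2, p, by omega, hpJ⟩
  · -- 2-restrictedness is preserved
    rw [hJ']
    rintro x (⟨hxJ, hxq⟩ | hxh)
    · simp only [Set.mem_singleton_iff] at hxq
      rcases hR x hxJ with h1 | h1
      · -- x - 1 ∈ J
        by_cases hy : x - 1 = q
        · rcases hcase with ⟨he, hw⟩ | ⟨he, hw⟩
          · -- q = p, x = p + 1, use x - 2 = p - 1
            right
            exact Or.inl ⟨by rw [show x - 2 = p - 1 by omega]; exact hp1, by
              simp only [Set.mem_singleton_iff]; omega⟩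
          · -- q = p - 1, x = p, use x - 2 = p - 2 (the new bead)
            right
            exact Or.inr (by simp only [Set.mem_singleton_iff]; omega)
        · exact Or.inl (Or.inl ⟨h1, by simpa using hy⟩)
      · -- x - 2 ∈ J
        by_cases hy : x - 2 = q
        · rcases hcase with ⟨he, hw⟩ | ⟨he, hw⟩
          · -- q = p, x = p + 2, use x - 1 = p + 1 ∈ J
            left
            exact Or.inl ⟨by rw [show x - 1 = p + 1 by omega]; exact hw, by
              simp only [Set.mem_singleton_iff]; omega⟩
          · -- q = p - 1, x = p + 1 ∈ J contradicts p + 1 ∉ J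
            exact absurd (by rwa [show x = p + 1 by omega] at hxJ) hw
        · exact Or.inr (Or.inl ⟨h1, by simpa using hy⟩)
    · -- x = p - 2 : use x - 1 = p - 3 ∈ J
      simp only [Set.mem_singleton_iff] at hxh
      subst hxh
      left
      refine Or.inl ⟨by rw [show p - 2 - 1 = p - 3 by omega]; exact hp3, ?_⟩
      simp only [Set.mem_singleton_iff]
      omega

end CF

namespace CF

lemma uset_empty_slide {r : PartitionSeq} {m : ℤ} (h : USet 2 (betaSet r m) = ∅) :
    ∀ x ∈ betaSet r m, x - 2 ∈ betaSet r m := by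
  intro x hx
  by_contra hc
  have hmem : x ∈ USet 2 (betaSet r m) := ⟨hx, by
    rw [show ((2:ℕ):ℤ) = 2 by norm_num]; exact hc⟩
  rw [h] at hmem
  exact hmem

lemma staircase_L {r : PartitionSeq} (hs : ∀ k, r.parts k = r.parts 0 - k) :
    Lnum r = r.parts 0 := by
  have h1 : r.parts (r.parts 0) = 0 := by rw [hs]; omega
  have h2 : Lnum r ≤ r.parts 0 := (parts_eq_zero_iff r _).1 h1
  have h3 : r.parts (Lnum r) = 0 := (parts_eq_zero_iff r _).2 le_rfl
  have h4 := hs (Lnum r)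
  omega

end CF


/-- Proposition 5.17: for `e = 2`, the ceiling (= roof) of a 2-restricted
partition `λ` is the staircase `(ℓ, ℓ-1, …, 1)` where `ℓ = ℓ(λ)` is the number
of nonzero parts, and the floor (= base) of `λ` is the staircase
`(a, a-1, …, 1)` where `a = λ_0` is the largest part. -/
theorem ceil_floor_for_e_two (m : ℤ) (lam rho beta : PartitionSeq)
    (hres : eRestricted 2 lam)
    (hroof : RoofOf 2 m lam rho) (hbase : BaseOf 2 m lam beta) :
    (∀ k, rho.parts k = Set.ncard {j : ℕ | lam.parts j ≠ 0} - k) ∧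
    (∀ k, beta.parts k = lam.parts 0 - k) := by
  open CF in
  constructor
  · -- roof
    obtain ⟨N, f, hf0, hfN, hstep, hfinal⟩ := hroof
    have hchain : ∀ k, k ≤ N →
        (HB (betaSet (f k) m)).ncard = (HB (betaSet lam m)).ncard := by
      intro k
      induction k with
      | zero => intro _; rw [hf0]
      | succ i ih =>
        intro hi
        rw [upStep_ncard (hstep i (by omega))]
        exact ih (by omega)
    have hN := hchain N le_rfl
    rw [hfN, ncard_HB, ncard_HB] at hN
    have hshape := core_shape (uset_empty_slide hfinal)
    have hL : Lnum rho = rho.parts 0 := staircase_L hshape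
    intro k
    rw [ncard_Lset lam, hshape k]
    omega
  · -- base
    obtain ⟨N, f, hf0, hfN, hstep, hfinal⟩ := hbase
    have hchain : ∀ k, k ≤ N → Rstr (betaSet (f k) m) ∧
        (GB (betaSet (f k) m)).ncard = (GB (betaSet lam m)).ncard := by
      intro k
      induction k with
      | zero =>
        intro _
        rw [hf0]
        exact ⟨rstr_of_eRestricted hres, rfl⟩
      | succ i ih =>
        intro hi
        obtain ⟨hR, hcard⟩ := ih (by omega)
        obtain ⟨hcard', hR'⟩ := downStep_step hR (hstep i (by omega))
        exact ⟨hR', by rw [hcard', hcard]⟩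
    have hN := (hchain N le_rfl).2
    rw [hfN, ncard_GB, ncard_GB] at hN
    have hshape := core_shape (uset_empty_slide hfinal)
    intro k
    rw [hshape k, hN]
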